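/- arXiv:1701.06743 — 2 statements merged into one kernel-verified Lean document; each statement's English description precedes it below -/
import Mathlib

section
/- If k1 is uniform on {0,1}^n, k2 is uniform on {0,1}^m, and k1, k2 are independent, then for any fixed ca ∈ {0,1}^n, any fixed ra in an address space of size 2^m, and any fixed set Valid of size V, the probability that ca = k1 and ra ∈ Π_{k2}(Valid) is at most (1/2^n)·(V/2^m). -/
open scoped ENNReal

/-! The event splits as `{k1 = ca} × {Π | Π⁻¹ ra ∈ Valid}`, whose factors are independent under the
uniform product measure. Composing a permutation with a transposition moves each fibre of
`Π ↦ Π a` bijectively onto any other, so `Π⁻¹ ra` is uniform on the address space and the second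
factor has probability exactly `V / 2^m`; the bound is therefore an equality. -/

open Finset Equiv

theorem PMF.toOuterMeasure_uniformOfFintype_setOf {α : Type*} [Fintype α] [Nonempty α]
    (p : α → Prop) [DecidablePred p] :
    (uniformOfFintype α).toOuterMeasure {x | p x} = #{x | p x} / Fintype.card α := by
  rw [toOuterMeasure_uniformOfFintype_apply, Fintype.card_ofFinset]
  rfl

theorem Finset.card_filter_prod_fst_eq_and {α β : Type*} [Fintype α] [Fintype β] [DecidableEq α]
    (a : α) (q : β → Prop) [DecidablePred q] :
    #{x : α × β | a = x.1 ∧ q x.2} = #{y | q y} := by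
  rw [← univ_product_univ, filter_product, card_product, filter_eq, if_pos (mem_univ a),
    card_singleton, one_mul]

theorem PMF.toOuterMeasure_uniformOfFintype_prod_fst_eq_and {α β : Type*} [Fintype α] [Nonempty α]
    [Fintype β] [Nonempty β] [DecidableEq α] (a : α) (q : β → Prop) [DecidablePred q] :
    (uniformOfFintype (α × β)).toOuterMeasure {x | a = x.1 ∧ q x.2} =
      1 / Fintype.card α * (uniformOfFintype β).toOuterMeasure {y | q y} := by
  rw [toOuterMeasure_uniformOfFintype_setOf, toOuterMeasure_uniformOfFintype_setOf,
    card_filter_prod_fst_eq_and, Fintype.card_prod, Nat.cast_mul, div_eq_mul_inv,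
    ENNReal.mul_inv (by simp) (by simp)]
  simp only [div_eq_mul_inv, one_mul]
  ring

namespace Equiv.Perm

variable {α : Type*} [Fintype α] [DecidableEq α]

theorem card_filter_apply_eq (a b c : α) :
    #{π : Perm α | π a = b} = #{π : Perm α | π a = c} :=
  card_equiv (Equiv.mulLeft (swap b c)) fun π => by simp [swap_apply_eq_iff]

theorem card_filter_apply_mem (a : α) (s : Finset α) :
    #{π : Perm α | π a ∈ s} = #s * #{π : Perm α | π a = a} := by
  rw [← sum_card_fiberwise_eq_card_filter, sum_const_nat fun b _ => card_filter_apply_eq a b a]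

theorem card_filter_apply_mem_mul_card (a : α) (s : Finset α) :
    Fintype.card α * #{π : Perm α | π a ∈ s} = Fintype.card (Perm α) * #s := by
  have hperm : Fintype.card (Perm α) = Fintype.card α * #{π : Perm α | π a = a} := by
    simpa using card_filter_apply_mem a univ
  rw [card_filter_apply_mem, hperm]
  ring

theorem card_filter_mem_image (a : α) (s : Finset α) :
    #{π : Perm α | a ∈ s.image π} = #{π : Perm α | π a ∈ s} :=
  card_equiv (Equiv.inv (Perm α)) fun π => by simp [← eq_symm_apply]

theorem toOuterMeasure_uniformOfFintype_mem_image (a : α) (s : Finset α) :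
    (PMF.uniformOfFintype (Perm α)).toOuterMeasure {π | a ∈ s.image π} =
      #s / Fintype.card α := by
  have : Nonempty α := ⟨a⟩
  rw [PMF.toOuterMeasure_uniformOfFintype_setOf, card_filter_mem_image,
    ENNReal.div_eq_div_iff (by simp) (by simp) (by simp [Fintype.card_ne_zero]) (by simp)]
  exact_mod_cast card_filter_apply_mem_mul_card a s

end Equiv.Perm

/-- Canary ⊗ ASLR single-query bound: with `k1` uniform on `{0,1}^n` and an
independent uniformly random permutation `Π` of a size-`2^m` address space,
the probability that a fixed `ca` equals `k1` and a fixed `ra` lies in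
`Π(Valid)` is at most `(1/2^n)·(V/2^m)`. -/
theorem canary_aslr_single_attempt (n m V : ℕ)
    (ca : Fin n → Bool) (ra : Fin (2 ^ m)) (Valid : Finset (Fin (2 ^ m)))
    (hV : Valid.card = V) :
    (PMF.uniformOfFintype ((Fin n → Bool) × Equiv.Perm (Fin (2 ^ m)))).toOuterMeasure
        {p : (Fin n → Bool) × Equiv.Perm (Fin (2 ^ m)) |
          ca = p.1 ∧ ra ∈ Valid.image p.2} ≤
      (1 / 2 ^ n) * ((V : ℝ≥0∞) / 2 ^ m) := by
  rw [PMF.toOuterMeasure_uniformOfFintype_prod_fst_eq_and ca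
      (fun π : Perm (Fin (2 ^ m)) => ra ∈ Valid.image π),
    Perm.toOuterMeasure_uniformOfFintype_mem_image, hV]
  simp
end

section
/- Let G1 and G2 be two sub-probability distributions over output pairs (o, bad) such that the marginal laws conditioned on bad = false agree and agree in total mass (identical-until-bad). Then for any event E on outputs, |Pr_{G1}[E] − Pr_{G2}[E]| ≤ Pr_{G1}[bad = true]. -/
open MeasureTheory

/-- Fundamental Lemma of Game Playing (distributional form): if two probability
measures on `O × Bool` agree on all sets `A × {false}`, then for any measurable
event `E` on outputs, `|Pr_{G1}[E] - Pr_{G2}[E]| ≤ Pr_{G1}[bad = true]`. -/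
theorem fundamental_lemma_game_playing {O : Type*} [MeasurableSpace O]
    (μ1 μ2 : Measure (O × Bool)) [IsProbabilityMeasure μ1] [IsProbabilityMeasure μ2]
    (hfalse : ∀ A : Set O, MeasurableSet A →
      μ1 (A ×ˢ ({false} : Set Bool)) = μ2 (A ×ˢ ({false} : Set Bool)))
    (E : Set O) (hE : MeasurableSet E) :
    |(μ1 (E ×ˢ (Set.univ : Set Bool))).toReal -
      (μ2 (E ×ˢ (Set.univ : Set Bool))).toReal| ≤
    (μ1 ((Set.univ : Set O) ×ˢ ({true} : Set Bool))).toReal := by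
  have huniv : (Set.univ : Set Bool) = ({false} : Set Bool) ∪ {true} := by
    ext b; cases b <;> simp
  have hdisj : ∀ A : Set O, Disjoint (A ×ˢ ({false} : Set Bool)) (A ×ˢ ({true} : Set Bool)) := by
    intro A
    apply Set.disjoint_left.2
    rintro ⟨o, b⟩ ⟨_, hb⟩ ⟨_, hb'⟩
    simp at hb hb'; simp [hb] at hb'
  have hsplit : ∀ (μ : Measure (O × Bool)) (A : Set O), MeasurableSet A →
      μ (A ×ˢ (Set.univ : Set Bool)) = μ (A ×ˢ {false}) + μ (A ×ˢ {true}) := by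
    intro μ A hA
    rw [huniv, Set.prod_union, measure_union (hdisj A)
      (hA.prod (measurableSet_singleton true))]
  have h1 := hsplit μ1 E hE
  have h2 := hsplit μ2 E hE
  have h1u := hsplit μ1 Set.univ MeasurableSet.univ
  have h2u := hsplit μ2 Set.univ MeasurableSet.univ
  have hu : μ1 ((Set.univ : Set O) ×ˢ (Set.univ : Set Bool))
      = μ2 ((Set.univ : Set O) ×ˢ (Set.univ : Set Bool)) := by
    rw [Set.univ_prod_univ, measure_univ, measure_univ]
  have htrue : μ2 ((Set.univ : Set O) ×ˢ ({true} : Set Bool))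
      = μ1 ((Set.univ : Set O) ×ˢ ({true} : Set Bool)) := by
    have hf := hfalse Set.univ MeasurableSet.univ
    have := hu
    rw [h1u, h2u, hf] at this
    exact (ENNReal.add_right_inj (measure_ne_top μ2 _)).1 this.symm
  -- bounds
  have hb1 : μ1 (E ×ˢ ({true} : Set Bool)) ≤ μ1 ((Set.univ : Set O) ×ˢ {true}) :=
    measure_mono (Set.prod_mono (Set.subset_univ E) le_rfl)
  have hb2 : μ2 (E ×ˢ ({true} : Set Bool)) ≤ μ1 ((Set.univ : Set O) ×ˢ {true}) := by
    rw [← htrue]; exact measure_mono (Set.prod_mono (Set.subset_univ E) le_rfl)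
  have hne : ∀ (μ : Measure (O × Bool)) [IsProbabilityMeasure μ] (s : Set (O × Bool)),
      μ s ≠ ⊤ := fun μ _ s => measure_ne_top μ s
  have hr1 : (μ1 (E ×ˢ (Set.univ : Set Bool))).toReal
      = (μ1 (E ×ˢ ({false} : Set Bool))).toReal + (μ1 (E ×ˢ ({true} : Set Bool))).toReal := by
    rw [h1, ENNReal.toReal_add (hne μ1 _) (hne μ1 _)]
  have hr2 : (μ2 (E ×ˢ (Set.univ : Set Bool))).toReal
      = (μ1 (E ×ˢ ({false} : Set Bool))).toReal + (μ2 (E ×ˢ ({true} : Set Bool))).toReal := by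
    rw [h2, hfalse E hE, ENNReal.toReal_add (hne μ2 _) (hne μ2 _)]
  rw [hr1, hr2]
  rw [abs_le]
  constructor <;> [skip; skip] <;>
  · have b1 := ENNReal.toReal_le_toReal (hne μ1 (E ×ˢ {true})) (hne μ1 _) |>.2 hb1
    have b2 := ENNReal.toReal_le_toReal (hne μ2 (E ×ˢ {true})) (hne μ1 _) |>.2 hb2
    have n1 : 0 ≤ (μ1 (E ×ˢ ({true} : Set Bool))).toReal := ENNReal.toReal_nonneg
    have n2 : 0 ≤ (μ2 (E ×ˢ ({true} : Set Bool))).toReal := ENNReal.toReal_nonneg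
    linarith
end
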